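/- arXiv:2404.17295 — 2 statements merged into one kernel-verified Lean document; each statement's English description precedes it below -/
import Mathlib

section
/- M,X ⊨_D φ ⩓ ψ if and only if M,X ⊨_D φ and M,X ⊨_D ψ, for all dependence logic formulas φ, ψ with FV(φ ⩓ ψ) ⊆ dom(X). -/
set_option linter.unusedSectionVars false

namespace Paper

/-- A first-order vocabulary (signature): function and relation symbols with arities. -/
structure Sig where
  Func : Type
  arF : Func → ℕ
  Rel : Type
  arR : Rel → ℕ

/-- A τ-structure with universe `α`. -/
structure Struc (σ : Sig) (α : Type) where
  interpF : (f : σ.Func) → (Fin (σ.arF f) → α) → α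
  interpR : (r : σ.Rel) → (Fin (σ.arR r) → α) → Prop

/-- First-order terms; variables are natural numbers. -/
inductive Term (σ : Sig) where
  | var : ℕ → Term σ
  | func : (f : σ.Func) → (Fin (σ.arF f) → Term σ) → Term σ

/-- Interpretation of a term under an assignment. -/
def Term.eval {σ : Sig} {α : Type} (𝕄 : Struc σ α) (s : ℕ → α) : Term σ → α
  | .var x => s x
  | .func f ts => 𝕄.interpF f (fun i => (ts i).eval 𝕄 s)

/-- Variables occurring in a term. -/
def Term.fv {σ : Sig} : Term σ → Finset ℕ
  | .var x => {x}
  | .func _ ts => Finset.univ.biUnion fun i => (ts i).fv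

/-- A team: a finite set of variables (the domain) together with a set of assignments.
Assignments are encoded as total functions `ℕ → α` that take the value `default`
outside the domain of the team (so that an assignment `s : dom(X) → M` is identified
with its extension by `default`). -/
structure Team (α : Type) [Inhabited α] where
  dom : Finset ℕ
  assignments : Set (ℕ → α)
  supported : ∀ s ∈ assignments, ∀ y ∉ dom, s y = default

variable {σ : Sig} {α : Type} [Inhabited α]

/-- The team `∃x X`: domain `dom(X) \ {x}`, consisting of all (supported) `s` such that
`s[a/x] ∈ X` for some `a` (which subsumes the clause "or `s ∈ X`" in the encoding). -/
def Team.eexists (x : ℕ) (X : Team α) : Team α where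
  dom := X.dom.erase x
  assignments := {s | (∀ y ∉ X.dom.erase x, s y = default) ∧
    ∃ a : α, Function.update s x a ∈ X.assignments}
  supported := fun _ hs => hs.1

/-- The team `∀x X`: domain `dom(X) \ {x}`, consisting of all (supported) `s` such that
`s[a/x] ∈ X` for all `a ∈ M` (when `x ∈ dom(X)`), or `s ∈ X` (when `x ∉ dom(X)`). -/
def Team.eforall (x : ℕ) (X : Team α) : Team α where
  dom := X.dom.erase x
  assignments := {s | (∀ y ∉ X.dom.erase x, s y = default) ∧
    if x ∈ X.dom then ∀ a : α, Function.update s x a ∈ X.assignments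
    else s ∈ X.assignments}
  supported := fun _ hs => hs.1

/-- Iterated application `∃x̄ X`. -/
def Team.eexistsN (l : List ℕ) (X : Team α) : Team α := l.foldr Team.eexists X

/-- Iterated application `∀x̄ X`. -/
def Team.eforallN (l : List ℕ) (X : Team α) : Team α := l.foldr Team.eforall X

/-- Restriction of an assignment to a finite set of variables (default outside). -/
def restrictFun (d : Finset ℕ) (s : ℕ → α) : ℕ → α := fun y => if y ∈ d then s y else default

/-- The restriction `X ↾ V` of a team, with domain `dom(X) ∩ V`. -/
def Team.restrict (X : Team α) (V : Finset ℕ) : Team α where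
  dom := X.dom ∩ V
  assignments := {t | ∃ s ∈ X.assignments, t = restrictFun (X.dom ∩ V) s}
  supported := by rintro t ⟨s, _, rfl⟩ y hy; simp only [restrictFun]; exact if_neg hy

/-- The full team on a domain `d`: all (supported) assignments. -/
def Team.full (α : Type) [Inhabited α] (d : Finset ℕ) : Team α where
  dom := d
  assignments := {s | ∀ y ∉ d, s y = default}
  supported := fun _ hs => hs

/-- The complement team `X^c`: all assignments with domain `dom(X)` not in `X`. -/
def Team.compl (X : Team α) : Team α where
  dom := X.dom
  assignments := {s | (∀ y ∉ X.dom, s y = default) ∧ s ∉ X.assignments}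
  supported := fun _ hs => hs.1

/-- Union of two teams. -/
def Team.unionT (X Y : Team α) : Team α where
  dom := X.dom ∪ Y.dom
  assignments := X.assignments ∪ Y.assignments
  supported := by
    rintro s (hs | hs) y hy
    · exact X.supported s hs y (fun h => hy (Finset.mem_union_left _ h))
    · exact Y.supported s hs y (fun h => hy (Finset.mem_union_right _ h))

/-- The team `X[M/x] = {s[a/x] | s ∈ X, a ∈ M}`. -/
def Team.subM (X : Team α) (x : ℕ) : Team α where
  dom := insert x X.dom
  assignments := {t | ∃ s ∈ X.assignments, ∃ a : α, t = Function.update s x a}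
  supported := by
    rintro t ⟨s, hs, a, rfl⟩ y hy
    have hyx : y ≠ x := fun h => hy (h ▸ Finset.mem_insert_self x X.dom)
    rw [Function.update_of_ne hyx]
    exact X.supported s hs y (fun h => hy (Finset.mem_insert_of_mem h))

/-- The team `X[f/x] = {s[f(s)/x] | s ∈ X}` for `f : X → M`. -/
def Team.subf (X : Team α) (x : ℕ) (f : (ℕ → α) → α) : Team α where
  dom := insert x X.dom
  assignments := {t | ∃ s ∈ X.assignments, t = Function.update s x (f s)}
  supported := by
    rintro t ⟨s, hs, rfl⟩ y hy
    have hyx : y ≠ x := fun h => hy (h ▸ Finset.mem_insert_self x X.dom)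
    rw [Function.update_of_ne hyx]
    exact X.supported s hs y (fun h => hy (Finset.mem_insert_of_mem h))

/-- The team `X[F/x] = {s[a/x] | s ∈ X, a ∈ F(s)}` for `F : X → P(M)`. -/
def Team.subF (X : Team α) (x : ℕ) (F : (ℕ → α) → Set α) : Team α where
  dom := insert x X.dom
  assignments := {t | ∃ s ∈ X.assignments, ∃ a ∈ F s, t = Function.update s x a}
  supported := by
    rintro t ⟨s, hs, a, _, rfl⟩ y hy
    have hyx : y ≠ x := fun h => hy (h ▸ Finset.mem_insert_self x X.dom)
    rw [Function.update_of_ne hyx]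
    exact X.supported s hs y (fun h => hy (Finset.mem_insert_of_mem h))

/-- Simultaneous update `s[v̄/x̄]` of an assignment along a list of variables. -/
def updVec (s : ℕ → α) (l : List ℕ) (v : Fin l.length → α) : ℕ → α :=
  fun y => if h : y ∈ l then v ⟨l.idxOf y, List.idxOf_lt_length_iff.mpr h⟩ else s y

theorem updVec_not_mem (s : ℕ → α) (l : List ℕ) (v : Fin l.length → α) {y : ℕ} (h : y ∉ l) :
    updVec s l v y = s y := dif_neg h

/-- The team `X[M/x̄]`. -/
def Team.subMVec (X : Team α) (l : List ℕ) : Team α where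
  dom := X.dom ∪ l.toFinset
  assignments := {t | ∃ s ∈ X.assignments, ∃ v : Fin l.length → α, t = updVec s l v}
  supported := by
    rintro t ⟨s, hs, v, rfl⟩ y hy
    rw [updVec_not_mem s l v (fun h => hy (Finset.mem_union_right _ (List.mem_toFinset.mpr h)))]
    exact X.supported s hs y (fun h => hy (Finset.mem_union_left _ h))

/-- The team `X[F/x̄] = {s[ā/x̄] | s ∈ X, ā ∈ F(s)}` for a set-valued `F`. -/
def Team.subFVec (X : Team α) (l : List ℕ) (F : (ℕ → α) → Set (Fin l.length → α)) :
    Team α where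
  dom := X.dom ∪ l.toFinset
  assignments := {t | ∃ s ∈ X.assignments, ∃ v ∈ F s, t = updVec s l v}
  supported := by
    rintro t ⟨s, hs, v, _, rfl⟩ y hy
    rw [updVec_not_mem s l v (fun h => hy (Finset.mem_union_right _ (List.mem_toFinset.mpr h)))]
    exact X.supported s hs y (fun h => hy (Finset.mem_union_left _ h))

/-- The team `Qx̄ Y = {s : dom(Y)∖{x̄} → M | Y_s(x̄) ∈ Q_M}` for a (local) generalized
quantifier `Q_M` of type `⟨k⟩` where `k` is the length of `x̄`. -/
def Team.qapp (l : List ℕ) (QM : Set (Set (Fin l.length → α))) (Y : Team α) : Team α where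
  dom := Y.dom \ l.toFinset
  assignments := {s | (∀ y ∉ Y.dom \ l.toFinset, s y = default) ∧
    {v : Fin l.length → α | updVec s l v ∈ Y.assignments} ∈ QM}
  supported := fun _ hs => hs.1

/-- `Qx Y` for a (local) generalized quantifier of type `⟨1⟩`. -/
def Team.q1app (x : ℕ) (QM : Set (Set α)) (Y : Team α) : Team α where
  dom := Y.dom.erase x
  assignments := {s | (∀ y ∉ Y.dom.erase x, s y = default) ∧
    {a : α | Function.update s x a ∈ Y.assignments} ∈ QM}
  supported := fun _ hs => hs.1

/-- The team `{ε}` consisting of just the empty assignment. -/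
def epsTeam (α : Type) [Inhabited α] : Team α where
  dom := ∅
  assignments := {fun _ => default}
  supported := by rintro s rfl y _; rfl

/-- `rel(X) ⊆ M^n`: the relation corresponding to a team, with `dom(X)` enumerated in
increasing order. -/
def Team.relSetN (X : Team α) (n : ℕ) (h : X.dom.card = n) : Set (Fin n → α) :=
  {v | ∃ s ∈ X.assignments, ∀ i, v i = s (X.dom.orderEmbOfFin h i)}

end Paper

namespace Paper

/-- Formulas of dependence logic (in negation normal form): literals, dependence atoms
`dep(t₁,…,tₙ,t)`, internal connectives `⩓`/`⩔`, and quantifiers. -/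
inductive DForm (σ : Sig) where
  | rel : (r : σ.Rel) → (Fin (σ.arR r) → Term σ) → DForm σ
  | nrel : (r : σ.Rel) → (Fin (σ.arR r) → Term σ) → DForm σ
  | eq : Term σ → Term σ → DForm σ
  | neq : Term σ → Term σ → DForm σ
  | dep : List (Term σ) → Term σ → DForm σ
  | iand : DForm σ → DForm σ → DForm σ
  | ior : DForm σ → DForm σ → DForm σ
  | ex : ℕ → DForm σ → DForm σ
  | all : ℕ → DForm σ → DForm σ

variable {σ : Sig} {α : Type} [Inhabited α]

/-- Free variables of a dependence logic formula. -/
def DForm.fv : DForm σ → Finset ℕ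
  | .rel _ ts | .nrel _ ts => Finset.univ.biUnion fun i => (ts i).fv
  | .eq t u | .neq t u => t.fv ∪ u.fv
  | .dep ts t => ts.foldr (fun u acc => u.fv ∪ acc) t.fv
  | .iand φ ψ | .ior φ ψ => φ.fv ∪ ψ.fv
  | .ex x φ | .all x φ => φ.fv.erase x

/-- Team satisfaction for dependence logic. -/
def DSat (𝕄 : Struc σ α) : DForm σ → Team α → Prop
  | .rel r ts, X => ∀ s ∈ X.assignments, 𝕄.interpR r fun i => (ts i).eval 𝕄 s
  | .nrel r ts, X => ∀ s ∈ X.assignments, ¬ 𝕄.interpR r fun i => (ts i).eval 𝕄 s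
  | .eq t u, X => ∀ s ∈ X.assignments, t.eval 𝕄 s = u.eval 𝕄 s
  | .neq t u, X => ∀ s ∈ X.assignments, t.eval 𝕄 s ≠ u.eval 𝕄 s
  | .dep ts t, X => ∀ s ∈ X.assignments, ∀ s' ∈ X.assignments,
      (∀ u ∈ ts, u.eval 𝕄 s = u.eval 𝕄 s') → t.eval 𝕄 s = t.eval 𝕄 s'
  | .iand φ ψ, X => ∃ Y Z : Team α, Y.dom = X.dom ∧ Z.dom = X.dom ∧
      X.assignments = Y.assignments ∩ Z.assignments ∧ DSat 𝕄 φ Y ∧ DSat 𝕄 ψ Z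
  | .ior φ ψ, X => ∃ Y Z : Team α, Y.dom = X.dom ∧ Z.dom = X.dom ∧
      X.assignments = Y.assignments ∪ Z.assignments ∧ DSat 𝕄 φ Y ∧ DSat 𝕄 ψ Z
  | .ex x φ, X => ∃ Y : Team α, x ∈ Y.dom ∧ Team.eexists x Y = Team.eexists x X ∧ DSat 𝕄 φ Y
  | .all x φ, X => ∃ Y : Team α, x ∈ Y.dom ∧ Team.eforall x Y = Team.eexists x X ∧ DSat 𝕄 φ Y

end Paper

/-!
Dependence logic is downward closed: whatever holds in a team holds in each of its subteams.
Granting this, `φ ⩓ ψ` holds in `X` iff both conjuncts do — from left to right shrink the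
witnessing teams `Y ⊇ X` and `Z ⊇ X` to `X`, from right to left take `Y = Z = X`.

Downward closure is proved by induction on the formula. For the connectives, intersect the
witnessing teams with the subteam. For a quantifier over `x`, keep only those assignments of
the witness whose projection along `x` survives in the smaller team; projecting the shrunken
witness along `x` then yields exactly `∃x` of the subteam.
-/

namespace Paper

variable {σ : Sig} {α : Type} [Inhabited α]

@[ext]
lemma Team.ext {X Y : Team α} (hdom : X.dom = Y.dom)
    (hassign : X.assignments = Y.assignments) : X = Y := by
  cases X; cases Y; cases hdom; cases hassign; rfl

structure Team.Subteam (X Y : Team α) : Prop where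
  dom_eq : X.dom = Y.dom
  subset : X.assignments ⊆ Y.assignments

def Team.inter (Y : Team α) (S : Set (ℕ → α)) : Team α where
  dom := Y.dom
  assignments := Y.assignments ∩ S
  supported := fun s hs => Y.supported s hs.1

lemma Team.inter_subteam (Y : Team α) (S : Set (ℕ → α)) : (Y.inter S).Subteam Y :=
  ⟨rfl, Set.inter_subset_left⟩

lemma Team.eexists_subteam {X Y : Team α} (x : ℕ) (h : X.Subteam Y) :
    (Team.eexists x X).Subteam (Team.eexists x Y) where
  dom_eq := congrArg (·.erase x) h.dom_eq
  subset := fun _ ⟨hsupp, a, ha⟩ => ⟨h.dom_eq ▸ hsupp, a, h.subset ha⟩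

lemma Team.eexists_inter_preimage_update (x : ℕ) (Y : Team α) (T : Set (ℕ → α)) :
    (Team.eexists x (Y.inter ((Function.update · x default) ⁻¹' T))).assignments =
      (Team.eexists x Y).assignments ∩ T := by
  ext s
  simp only [Team.eexists, Team.inter, Set.mem_ofPred_eq, Set.mem_inter_iff, Set.mem_preimage,
    Function.update_idem, and_assoc]
  refine and_congr_right fun hsupp => ?_
  rw [Function.update_eq_self_iff.mpr (hsupp x (Finset.notMem_erase x _)).symm]
  exact exists_and_right

lemma Team.eforall_inter_preimage_update (x : ℕ) (Y : Team α) (T : Set (ℕ → α)) :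
    (Team.eforall x (Y.inter ((Function.update · x default) ⁻¹' T))).assignments =
      (Team.eforall x Y).assignments ∩ T := by
  ext s
  simp only [Team.eforall, Team.inter, Set.mem_ofPred_eq, Set.mem_inter_iff, Set.mem_preimage,
    Function.update_idem, and_assoc]
  refine and_congr_right fun hsupp => ?_
  rw [Function.update_eq_self_iff.mpr (hsupp x (Finset.notMem_erase x _)).symm]
  split_ifs
  · exact forall_and_right _ _
  · exact Iff.rfl

lemma Team.eexists_inter_preimage_update_eq {x : ℕ} {X Y : Team α}
    (h : (Team.eexists x X).Subteam (Team.eexists x Y)) :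
    Team.eexists x (Y.inter ((Function.update · x default) ⁻¹' (Team.eexists x X).assignments)) =
      Team.eexists x X := by
  ext1
  · exact h.dom_eq.symm
  · rw [Team.eexists_inter_preimage_update, Set.inter_eq_right.mpr h.subset]

lemma Team.eforall_inter_preimage_update_eq {x : ℕ} {X Y : Team α}
    (h : (Team.eexists x X).Subteam (Team.eforall x Y)) :
    Team.eforall x (Y.inter ((Function.update · x default) ⁻¹' (Team.eexists x X).assignments)) =
      Team.eexists x X := by
  ext1
  · exact h.dom_eq.symm
  · rw [Team.eforall_inter_preimage_update, Set.inter_eq_right.mpr h.subset]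

theorem DSat.of_subteam {𝕄 : Struc σ α} {φ : DForm σ} {X Y : Team α} (h : X.Subteam Y)
    (hY : DSat 𝕄 φ Y) : DSat 𝕄 φ X := by
  induction φ generalizing X Y with
  | rel | nrel | eq | neq => exact fun s hs => hY s (h.subset hs)
  | dep => exact fun s hs s' hs' => hY s (h.subset hs) s' (h.subset hs')
  | iand φ ψ ihφ ihψ =>
    obtain ⟨Y₁, Y₂, h₁, h₂, hY, hφ, hψ⟩ := hY
    refine ⟨Y₁.inter X.assignments, Y₂.inter X.assignments, h₁.trans h.dom_eq.symm,
      h₂.trans h.dom_eq.symm, ?_, ihφ (Y₁.inter_subteam _) hφ, ihψ (Y₂.inter_subteam _) hψ⟩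
    rw [Team.inter, Team.inter, ← Set.inter_inter_distrib_right, ← hY,
      Set.inter_eq_right.mpr h.subset]
  | ior φ ψ ihφ ihψ =>
    obtain ⟨Y₁, Y₂, h₁, h₂, hY, hφ, hψ⟩ := hY
    refine ⟨Y₁.inter X.assignments, Y₂.inter X.assignments, h₁.trans h.dom_eq.symm,
      h₂.trans h.dom_eq.symm, ?_, ihφ (Y₁.inter_subteam _) hφ, ihψ (Y₂.inter_subteam _) hψ⟩
    rw [Team.inter, Team.inter, ← Set.union_inter_distrib_right, ← hY,
      Set.inter_eq_right.mpr h.subset]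
  | ex x φ ih =>
    obtain ⟨W, hx, hW, hφ⟩ := hY
    have hsub := Team.eexists_subteam x h
    rw [← hW] at hsub
    exact ⟨W.inter ((Function.update · x default) ⁻¹' (Team.eexists x X).assignments), hx,
      Team.eexists_inter_preimage_update_eq hsub, ih (W.inter_subteam _) hφ⟩
  | all x φ ih =>
    obtain ⟨W, hx, hW, hφ⟩ := hY
    have hsub := Team.eexists_subteam x h
    rw [← hW] at hsub
    exact ⟨W.inter ((Function.update · x default) ⁻¹' (Team.eexists x X).assignments), hx,
      Team.eforall_inter_preimage_update_eq hsub, ih (W.inter_subteam _) hφ⟩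

theorem dsat_iand_iff_general {σ : Sig} {α : Type} [Inhabited α] (𝕄 : Struc σ α)
    (φ ψ : DForm σ) (X : Team α) :
    DSat 𝕄 (DForm.iand φ ψ) X ↔ DSat 𝕄 φ X ∧ DSat 𝕄 ψ X := by
  constructor
  · rintro ⟨Y, Z, hY, hZ, hX, hφ, hψ⟩
    exact ⟨hφ.of_subteam ⟨hY.symm, hX ▸ Set.inter_subset_left⟩,
      hψ.of_subteam ⟨hZ.symm, hX ▸ Set.inter_subset_right⟩⟩
  · rintro ⟨hφ, hψ⟩
    exact ⟨X, X, rfl, rfl, (Set.inter_self _).symm, hφ, hψ⟩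

/-- `M,X ⊨_D φ ⩓ ψ` iff `M,X ⊨_D φ` and `M,X ⊨_D ψ`, for all dependence
logic formulas `φ`, `ψ` with `FV(φ ⩓ ψ) ⊆ dom(X)`. -/
theorem dsat_iand_iff {σ : Sig} {α : Type} [Inhabited α] (𝕄 : Struc σ α)
    (φ ψ : DForm σ) (X : Team α) (hfv : (DForm.iand φ ψ).fv ⊆ X.dom) :
    DSat 𝕄 (DForm.iand φ ψ) X ↔ DSat 𝕄 φ X ∧ DSat 𝕄 ψ X :=
  dsat_iand_iff_general 𝕄 φ ψ X

end Paper
end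

section
/- If φ is an untangled first-order formula of mt-logic and X a team such that dom(X) ∩ BV(φ) = ∅ and FV(φ) ⊆ dom(X), then M,X ⊨_mt φ if and only if X = ⟦φ⟧^M_{dom(X)}. -/
set_option linter.unusedSectionVars false

namespace Paper

/-- Formulas of mt-logic: literals, internal connectives `⩓`/`⩔` (`iand`/`ior`),
external connectives `∧`/`∨` (`eand`/`eor`), and quantifiers. -/
inductive MForm (σ : Sig) where
  | rel : (r : σ.Rel) → (Fin (σ.arR r) → Term σ) → MForm σ
  | nrel : (r : σ.Rel) → (Fin (σ.arR r) → Term σ) → MForm σ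
  | eq : Term σ → Term σ → MForm σ
  | neq : Term σ → Term σ → MForm σ
  | iand : MForm σ → MForm σ → MForm σ
  | ior : MForm σ → MForm σ → MForm σ
  | eand : MForm σ → MForm σ → MForm σ
  | eor : MForm σ → MForm σ → MForm σ
  | ex : ℕ → MForm σ → MForm σ
  | all : ℕ → MForm σ → MForm σ

variable {σ : Sig} {α : Type} [Inhabited α]

/-- Free variables of an mt-formula. -/
def MForm.fv : MForm σ → Finset ℕ
  | .rel _ ts | .nrel _ ts => Finset.univ.biUnion fun i => (ts i).fv
  | .eq t u | .neq t u => t.fv ∪ u.fv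
  | .iand φ ψ | .ior φ ψ | .eand φ ψ | .eor φ ψ => φ.fv ∪ ψ.fv
  | .ex x φ | .all x φ => φ.fv.erase x

/-- Bound variables of an mt-formula. -/
def MForm.bv : MForm σ → Finset ℕ
  | .rel _ _ | .nrel _ _ | .eq _ _ | .neq _ _ => ∅
  | .iand φ ψ | .ior φ ψ | .eand φ ψ | .eor φ ψ => φ.bv ∪ ψ.bv
  | .ex x φ | .all x φ => insert x φ.bv

/-- All variables occurring in an mt-formula (free, bound, or in terms). -/
def MForm.vars : MForm σ → Finset ℕ
  | .rel _ ts | .nrel _ ts => Finset.univ.biUnion fun i => (ts i).fv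
  | .eq t u | .neq t u => t.fv ∪ u.fv
  | .iand φ ψ | .ior φ ψ | .eand φ ψ | .eor φ ψ => φ.vars ∪ ψ.vars
  | .ex x φ | .all x φ => insert x φ.vars

/-- An mt-formula is first-order if it contains no external connective `∧`/`∨`. -/
def MForm.isFO : MForm σ → Prop
  | .eand _ _ | .eor _ _ => False
  | .iand φ ψ | .ior φ ψ => φ.isFO ∧ ψ.isFO
  | .ex _ φ | .all _ φ => φ.isFO
  | _ => True

/-- No quantifier `Qx` occurs within the scope of another quantifier `Q'x`. -/
def MForm.noRebind : MForm σ → Prop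
  | .rel _ _ | .nrel _ _ | .eq _ _ | .neq _ _ => True
  | .iand φ ψ | .ior φ ψ | .eand φ ψ | .eor φ ψ => φ.noRebind ∧ ψ.noRebind
  | .ex x φ | .all x φ => x ∉ φ.bv ∧ φ.noRebind

/-- A formula is untangled if no quantifier `Qx` appears in the scope of another
quantifier `Q'x` and no variable is both free and bound. -/
def MForm.untangled (φ : MForm σ) : Prop := φ.noRebind ∧ Disjoint φ.fv φ.bv

/-- Ordinary Tarskian satisfaction of an mt-formula by a single assignment
(both internal and external connectives are read classically). -/
def MForm.tsat (𝕄 : Struc σ α) : (ℕ → α) → MForm σ → Prop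
  | s, .rel r ts => 𝕄.interpR r fun i => (ts i).eval 𝕄 s
  | s, .nrel r ts => ¬ 𝕄.interpR r fun i => (ts i).eval 𝕄 s
  | s, .eq t u => t.eval 𝕄 s = u.eval 𝕄 s
  | s, .neq t u => t.eval 𝕄 s ≠ u.eval 𝕄 s
  | s, .iand φ ψ => φ.tsat 𝕄 s ∧ ψ.tsat 𝕄 s
  | s, .ior φ ψ => φ.tsat 𝕄 s ∨ ψ.tsat 𝕄 s
  | s, .eand φ ψ => φ.tsat 𝕄 s ∧ ψ.tsat 𝕄 s
  | s, .eor φ ψ => φ.tsat 𝕄 s ∨ ψ.tsat 𝕄 s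
  | s, .ex x φ => ∃ a : α, φ.tsat 𝕄 (Function.update s x a)
  | s, .all x φ => ∀ a : α, φ.tsat 𝕄 (Function.update s x a)

/-- The semantic value `⟦φ⟧^𝕄_{d}`: the team with domain `d` of all assignments
satisfying `φ` in the Tarskian sense. -/
def SemVal (𝕄 : Struc σ α) (d : Finset ℕ) (φ : MForm σ) : Team α where
  dom := d
  assignments := {s | (∀ y ∉ d, s y = default) ∧ φ.tsat 𝕄 s}
  supported := fun _ hs => hs.1

/-- Team satisfaction for mt-logic. -/
def MSat (𝕄 : Struc σ α) : MForm σ → Team α → Prop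
  | .rel r ts, X => ∀ s : ℕ → α, (∀ y ∉ X.dom, s y = default) →
      (s ∈ X.assignments ↔ 𝕄.interpR r fun i => (ts i).eval 𝕄 s)
  | .nrel r ts, X => ∀ s : ℕ → α, (∀ y ∉ X.dom, s y = default) →
      (s ∈ X.assignments ↔ ¬ 𝕄.interpR r fun i => (ts i).eval 𝕄 s)
  | .eq t u, X => ∀ s : ℕ → α, (∀ y ∉ X.dom, s y = default) →
      (s ∈ X.assignments ↔ t.eval 𝕄 s = u.eval 𝕄 s)
  | .neq t u, X => ∀ s : ℕ → α, (∀ y ∉ X.dom, s y = default) →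
      (s ∈ X.assignments ↔ t.eval 𝕄 s ≠ u.eval 𝕄 s)
  | .iand φ ψ, X => ∃ Y Z : Team α, Y.dom = X.dom ∧ Z.dom = X.dom ∧
      X.assignments = Y.assignments ∩ Z.assignments ∧ MSat 𝕄 φ Y ∧ MSat 𝕄 ψ Z
  | .ior φ ψ, X => ∃ Y Z : Team α, Y.dom = X.dom ∧ Z.dom = X.dom ∧
      X.assignments = Y.assignments ∪ Z.assignments ∧ MSat 𝕄 φ Y ∧ MSat 𝕄 ψ Z
  | .eand φ ψ, X => MSat 𝕄 φ X ∧ MSat 𝕄 ψ X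
  | .eor φ ψ, X => MSat 𝕄 φ X ∨ MSat 𝕄 ψ X
  | .ex x φ, X => ∃ Y : Team α, x ∈ Y.dom ∧ Team.eexists x Y = Team.eexists x X ∧ MSat 𝕄 φ Y
  | .all x φ, X => ∃ Y : Team α, x ∈ Y.dom ∧ Team.eforall x Y = Team.eexists x X ∧ MSat 𝕄 φ Y

/-- Iterated existential quantification `∃w̄ φ`. -/
def MForm.exN (l : List ℕ) (φ : MForm σ) : MForm σ := l.foldr MForm.ex φ

/-- Iterated universal quantification `∀w̄ φ`. -/
def MForm.allN (l : List ℕ) (φ : MForm σ) : MForm σ := l.foldr MForm.all φ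

/-- The formula `⊤_{w̄} = ∃w̄ (w₀ = w₀ ∨ w₀ ≠ w₀)` with a designated `w₀ ∈ w̄`
(here `∨` is the external disjunction). -/
def TopW (l : List ℕ) (w₀ : ℕ) : MForm σ :=
  MForm.exN l (MForm.eor (MForm.eq (.var w₀) (.var w₀)) (MForm.neq (.var w₀) (.var w₀)))

/-- `⊤_{w̄}` with `w₀` taken to be the first variable of `w̄`. -/
def Top (l : List ℕ) : MForm σ := TopW l l.headI

end Paper

/-! By induction, on a domain disjoint from its bound variables a first-order formula is
satisfied by exactly one team, its semantic value. So the witnesses of an internal connective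
are the semantic values of its two arguments, whose intersection (union) is that of the
compound formula. For `Qx φ`, `x ∉ dom(X)` gives `∃x X = X` and forces the witness `Y` to have
domain `dom(X) ∪ {x}`, still disjoint from `BV(φ)` because no `Qx` is rebound inside `φ`;
hence `Y = ⟦φ⟧`, and its `∃x`- (`∀x`-) projection is `⟦Qx φ⟧`. -/

namespace Paper

attribute [ext] Team

variable {σ : Sig} {α : Type} [Inhabited α] (𝕄 : Struc σ α)

theorem Team.eexists_eq_self {X : Team α} {x : ℕ} (hx : x ∉ X.dom) : X.eexists x = X := by
  have hdom : X.dom.erase x = X.dom := Finset.erase_eq_of_notMem hx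
  ext s
  · simp only [Team.eexists, hdom]
  · simp only [Team.eexists, hdom, Set.mem_ofPred_eq]
    constructor
    · rintro ⟨hs, a, ha⟩
      have hax : a = s x := by
        rw [hs x hx, ← X.supported _ ha x hx, Function.update_self]
      rwa [hax, Function.update_eq_self] at ha
    · intro hs
      exact ⟨X.supported s hs, s x, by rwa [Function.update_eq_self]⟩

theorem update_supported {d : Finset ℕ} {s : ℕ → α} (hs : ∀ y ∉ d, s y = default)
    (x : ℕ) (a : α) : ∀ y ∉ insert x d, Function.update s x a y = default := by
  intro y hy
  rw [Finset.mem_insert, not_or] at hy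
  rw [Function.update_of_ne hy.1, hs y hy.2]

theorem eexists_semVal {d : Finset ℕ} {x : ℕ} (hx : x ∉ d) (φ : MForm σ) :
    (SemVal 𝕄 (insert x d) φ).eexists x = SemVal 𝕄 d (.ex x φ) := by
  ext s
  · simp only [Team.eexists, SemVal, Finset.erase_insert hx]
  · simp only [Team.eexists, SemVal, Finset.erase_insert hx, Set.mem_ofPred_eq, MForm.tsat]
    exact and_congr_right fun hs =>
      exists_congr fun a => and_iff_right (update_supported hs x a)

theorem eforall_semVal {d : Finset ℕ} {x : ℕ} (hx : x ∉ d) (φ : MForm σ) :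
    (SemVal 𝕄 (insert x d) φ).eforall x = SemVal 𝕄 d (.all x φ) := by
  ext s
  · simp only [Team.eforall, SemVal, Finset.erase_insert hx]
  · simp only [Team.eforall, SemVal, Finset.erase_insert hx, Finset.mem_insert_self,
      if_true, Set.mem_ofPred_eq, MForm.tsat]
    exact and_congr_right fun hs =>
      forall_congr' fun a => and_iff_right (update_supported hs x a)

theorem semVal_iand_assignments (d : Finset ℕ) (φ ψ : MForm σ) :
    (SemVal 𝕄 d (.iand φ ψ)).assignments =
      (SemVal 𝕄 d φ).assignments ∩ (SemVal 𝕄 d ψ).assignments :=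
  Set.ext fun _ => and_and_left

theorem semVal_ior_assignments (d : Finset ℕ) (φ ψ : MForm σ) :
    (SemVal 𝕄 d (.ior φ ψ)).assignments =
      (SemVal 𝕄 d φ).assignments ∪ (SemVal 𝕄 d ψ).assignments :=
  Set.ext fun _ => and_or_left

theorem eq_semVal_iff_assignments_eq (X : Team α) (φ : MForm σ) :
    X = SemVal 𝕄 X.dom φ ↔ X.assignments = (SemVal 𝕄 X.dom φ).assignments :=
  Team.ext_iff.trans (and_iff_right rfl)

theorem eq_semVal_iff_forall (X : Team α) (φ : MForm σ) :
    X = SemVal 𝕄 X.dom φ ↔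
      ∀ s : ℕ → α, (∀ y ∉ X.dom, s y = default) → (s ∈ X.assignments ↔ φ.tsat 𝕄 s) := by
  rw [eq_semVal_iff_assignments_eq, Set.ext_iff]
  refine ⟨fun h s hs => (h s).trans (and_iff_right hs), fun h s => ?_⟩
  exact ⟨fun hsX => ⟨X.supported s hsX, (h s (X.supported s hsX)).1 hsX⟩,
    fun hs => (h s hs.1).2 hs.2⟩

theorem exists_split_iff_of_unique {X A B : Team α} {P Q : Team α → Prop}
    (op : Set (ℕ → α) → Set (ℕ → α) → Set (ℕ → α)) (hA : A.dom = X.dom) (hB : B.dom = X.dom)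
    (hP : ∀ Y : Team α, Y.dom = X.dom → (P Y ↔ Y = A))
    (hQ : ∀ Z : Team α, Z.dom = X.dom → (Q Z ↔ Z = B)) :
    (∃ Y Z : Team α, Y.dom = X.dom ∧ Z.dom = X.dom ∧
        X.assignments = op Y.assignments Z.assignments ∧ P Y ∧ Q Z) ↔
      X.assignments = op A.assignments B.assignments := by
  constructor
  · rintro ⟨Y, Z, hY, hZ, hX, hPY, hQZ⟩
    rwa [(hP Y hY).1 hPY, (hQ Z hZ).1 hQZ] at hX
  · exact fun hX => ⟨A, B, hA, hB, hX, (hP A hA).2 rfl, (hQ B hB).2 rfl⟩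

theorem exists_quant_witness_iff_of_unique {X A : Team α} {x : ℕ} {Q : Team α → Team α}
    {P : Team α → Prop} (hQ : ∀ Y, (Q Y).dom = Y.dom.erase x) (hA : A.dom = insert x X.dom)
    (hP : ∀ Y : Team α, Y.dom = insert x X.dom → (P Y ↔ Y = A)) :
    (∃ Y : Team α, x ∈ Y.dom ∧ Q Y = X ∧ P Y) ↔ Q A = X := by
  constructor
  · rintro ⟨Y, hxY, hQY, hPY⟩
    have hY : Y.dom = insert x X.dom := by rw [← hQY, hQ, Finset.insert_erase hxY]
    rwa [← (hP Y hY).1 hPY]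
  · exact fun hQA => ⟨A, hA ▸ Finset.mem_insert_self x X.dom, hQA, (hP A hA).2 rfl⟩

theorem msat_iff_eq_semVal {φ : MForm σ} (hFO : φ.isFO) (hφ : φ.noRebind) {X : Team α}
    (hX : Disjoint X.dom φ.bv) : MSat 𝕄 φ X ↔ X = SemVal 𝕄 X.dom φ := by
  induction φ generalizing X with
  | rel | nrel | eq | neq => rw [eq_semVal_iff_forall]; rfl
  | eand | eor => exact hFO.elim
  | iand φ ψ ihφ ihψ =>
    rw [eq_semVal_iff_assignments_eq, semVal_iand_assignments]
    exact exists_split_iff_of_unique (· ∩ ·) rfl rfl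
      (fun Y hY => by rw [ihφ hFO.1 hφ.1 (hY ▸ hX.mono_right Finset.subset_union_left), hY])
      (fun Z hZ => by rw [ihψ hFO.2 hφ.2 (hZ ▸ hX.mono_right Finset.subset_union_right), hZ])
  | ior φ ψ ihφ ihψ =>
    rw [eq_semVal_iff_assignments_eq, semVal_ior_assignments]
    exact exists_split_iff_of_unique (· ∪ ·) rfl rfl
      (fun Y hY => by rw [ihφ hFO.1 hφ.1 (hY ▸ hX.mono_right Finset.subset_union_left), hY])
      (fun Z hZ => by rw [ihψ hFO.2 hφ.2 (hZ ▸ hX.mono_right Finset.subset_union_right), hZ])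
  | ex x φ ih =>
    have hx : x ∉ X.dom := Finset.disjoint_right.1 hX (Finset.mem_insert_self x _)
    have hXx : Disjoint (insert x X.dom) φ.bv :=
      Finset.disjoint_insert_left.2 ⟨hφ.1, hX.mono_right (Finset.subset_insert x _)⟩
    rw [MSat, Team.eexists_eq_self hx, ← eexists_semVal 𝕄 hx, eq_comm]
    exact exists_quant_witness_iff_of_unique (fun _ => rfl) rfl
      (fun Y hY => by rw [ih hFO hφ.2 (hY ▸ hXx), hY])
  | all x φ ih =>
    have hx : x ∉ X.dom := Finset.disjoint_right.1 hX (Finset.mem_insert_self x _)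
    have hXx : Disjoint (insert x X.dom) φ.bv :=
      Finset.disjoint_insert_left.2 ⟨hφ.1, hX.mono_right (Finset.subset_insert x _)⟩
    rw [MSat, Team.eexists_eq_self hx, ← eforall_semVal 𝕄 hx, eq_comm]
    exact exists_quant_witness_iff_of_unique (fun _ => rfl) rfl
      (fun Y hY => by rw [ih hFO hφ.2 (hY ▸ hXx), hY])

theorem msat_untangled_fo_general {σ : Sig} {α : Type} [Inhabited α] (𝕄 : Struc σ α)
    (φ : MForm σ) (X : Team α) (hFO : φ.isFO) (hUnt : φ.untangled)
    (hBV : Disjoint X.dom φ.bv) :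
    MSat 𝕄 φ X ↔ X = SemVal 𝕄 X.dom φ :=
  msat_iff_eq_semVal 𝕄 hFO hUnt.1 hBV

/-- STATEMENT 8: If `φ` is an untangled first-order formula of mt-logic and `X` a team
such that `dom(X) ∩ BV(φ) = ∅` and `FV(φ) ⊆ dom(X)`, then `M,X ⊨_mt φ` iff
`X = ⟦φ⟧^M_{dom(X)}`. -/
theorem msat_untangled_fo {σ : Sig} {α : Type} [Inhabited α] (𝕄 : Struc σ α)
    (φ : MForm σ) (X : Team α) (hFO : φ.isFO) (hUnt : φ.untangled)
    (hBV : Disjoint X.dom φ.bv) (hfv : φ.fv ⊆ X.dom) :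
    MSat 𝕄 φ X ↔ X = SemVal 𝕄 X.dom φ :=
  msat_untangled_fo_general 𝕄 φ X hFO hUnt hBV

end Paper
end
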